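/- Let N0 ∈ K with 0 ≤ N0 ≤ 1 a.e., let V0 ∈ L^∞(0,1), set N(t) := proj_K(N0 + t·V0), and assume that for every t ≥ 0 one has 0 ≤ N(t,x) ≤ 1 for a.e. x ∈ (0,1). Let N_∞ ∈ L²(0,1) be the a.e. (equivalently L²) limit of N(t) as t → ∞. Then ∫₀¹ V0(x)N_∞(x)dx = 0 and ∫₀¹ N0(x)N_∞(x)dx = ∫₀¹ N_∞(x)²dx. -/

import Mathlib

open MeasureTheory

/-- Lebesgue measure restricted to the interval `(0,1)`; `L²(0,1)` is `Lp ℝ 2 μ01`. -/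
noncomputable def μ01 : Measure ℝ := volume.restrict (Set.Ioo 0 1)

/-- `K` is the set of elements of `L²(0,1)` admitting a nondecreasing representative
on `(0,1)`; it is a nonempty closed convex cone. -/
def K01 : Set (Lp ℝ 2 μ01) :=
  {f | ∃ g : ℝ → ℝ, MonotoneOn g (Set.Ioo 0 1) ∧ (f : ℝ → ℝ) =ᵐ[μ01] g}



instance : IsProbabilityMeasure μ01 := ⟨by simp [μ01]⟩

lemma inner_eq_int (f g : Lp ℝ 2 μ01) :
    (inner ℝ f g : ℝ) = ∫ x, (f : ℝ → ℝ) x * (g : ℝ → ℝ) x ∂μ01 := by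
  rw [L2.inner_def]; simp [RCLike.inner_apply, mul_comm]

lemma K01_zero : (0 : Lp ℝ 2 μ01) ∈ K01 :=
  ⟨fun _ => 0, monotoneOn_const, Lp.coeFn_zero ℝ 2 μ01⟩

lemma K01_smul {c : ℝ} (hc : 0 ≤ c) {f : Lp ℝ 2 μ01} (hf : f ∈ K01) : c • f ∈ K01 := by
  obtain ⟨g, hg, hfg⟩ := hf
  refine ⟨fun x => c * g x, fun x hx y hy hxy => mul_le_mul_of_nonneg_left (hg hx hy hxy) hc, ?_⟩
  filter_upwards [Lp.coeFn_smul c f, hfg] with x h1 h2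
  simp [h1, h2]

lemma K01_add {f g : Lp ℝ 2 μ01} (hf : f ∈ K01) (hg : g ∈ K01) : f + g ∈ K01 := by
  obtain ⟨gf, hgf, hffg⟩ := hf
  obtain ⟨gg, hgg, hggg⟩ := hg
  refine ⟨fun x => gf x + gg x, fun x hx y hy hxy =>
    add_le_add (hgf hx hy hxy) (hgg hx hy hxy), ?_⟩
  filter_upwards [Lp.coeFn_add f g, hffg, hggg] with x h1 h2 h3
  rw [h1, Pi.add_apply, h2, h3]

lemma proj_var (proj : Lp ℝ 2 μ01 → Lp ℝ 2 μ01)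
    (hmem : ∀ u, proj u ∈ K01)
    (hnear : ∀ u, ∀ k ∈ K01, ‖u - proj u‖ ≤ ‖u - k‖) :
    ∀ u, ∀ k ∈ K01, (inner ℝ (u - proj u) (k - proj u) : ℝ) ≤ 0 := by
  intro u k hk
  set P := proj u with hP
  have key : ∀ θ : ℝ, 0 < θ → θ ≤ 1 →
      2 * (inner ℝ (u - P) (k - P) : ℝ) ≤ θ * ‖k - P‖ ^ 2 := by
    intro θ h0 h1
    have hmemθ : (1 - θ) • P + θ • k ∈ K01 :=
      K01_add (K01_smul (by linarith) (hmem u)) (K01_smul h0.le hk)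
    have h := hnear u _ hmemθ
    have hrw : u - ((1 - θ) • P + θ • k) = (u - P) - θ • (k - P) := by
      rw [smul_sub, sub_smul, one_smul]; abel
    have hsq : ‖u - P‖ ^ 2 ≤ ‖(u - P) - θ • (k - P)‖ ^ 2 := by
      rw [← hrw]; exact pow_le_pow_left₀ (norm_nonneg _) h 2
    rw [norm_sub_sq_real (u - P) (θ • (k - P)), real_inner_smul_right, norm_smul] at hsq
    rw [Real.norm_eq_abs, abs_of_pos h0] at hsq
    nlinarith [norm_nonneg (k - P), sq_nonneg θ]
  by_contra hlt
  push_neg at hlt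
  set a := (inner ℝ (u - P) (k - P) : ℝ) with ha
  set C := ‖k - P‖ ^ 2 with hC
  have hC0 : 0 ≤ C := sq_nonneg _
  have hθpos : 0 < min 1 (a / (C + 1)) := by
    apply lt_min one_pos
    positivity
  have h2 := key _ hθpos (min_le_left _ _)
  have h3 : min 1 (a / (C + 1)) ≤ a / (C + 1) := min_le_right _ _
  have h4 : min 1 (a / (C + 1)) * C ≤ a / (C + 1) * C :=
    mul_le_mul_of_nonneg_right h3 hC0
  have h5 : a / (C + 1) * C < a := by
    rw [div_mul_eq_mul_div, div_lt_iff₀ (by linarith)]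
    nlinarith
  linarith

lemma proj_orth (proj : Lp ℝ 2 μ01 → Lp ℝ 2 μ01)
    (hmem : ∀ u, proj u ∈ K01)
    (hnear : ∀ u, ∀ k ∈ K01, ‖u - proj u‖ ≤ ‖u - k‖) (u : Lp ℝ 2 μ01) :
    (inner ℝ (u - proj u) (proj u) : ℝ) = 0 := by
  have h1 := proj_var proj hmem hnear u 0 K01_zero
  have h2 := proj_var proj hmem hnear u ((2:ℝ) • proj u) (K01_smul (by norm_num) (hmem u))
  rw [zero_sub, inner_neg_right] at h1
  have h3 : (2:ℝ) • proj u - proj u = proj u := by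
    rw [two_smul]; abel
  rw [h3] at h2
  linarith

lemma proj_ineq (proj : Lp ℝ 2 μ01 → Lp ℝ 2 μ01)
    (hmem : ∀ u, proj u ∈ K01)
    (hnear : ∀ u, ∀ k ∈ K01, ‖u - proj u‖ ≤ ‖u - k‖) :
    ∀ u, ∀ k ∈ K01, (inner ℝ (u - proj u) k : ℝ) ≤ 0 := by
  intro u k hk
  have h1 := proj_var proj hmem hnear u k hk
  have h2 := proj_orth proj hmem hnear u
  rw [inner_sub_right] at h1
  linarith

/-- Under the confinement hypothesis, if `N_∞ ∈ L²(0,1)` is the a.e.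
limit of `N t = proj_K (N0 + t • V0)` as `t → ∞`, then `∫₀¹ V0 N_∞ = 0` and
`∫₀¹ N0 N_∞ = ∫₀¹ N_∞²`. -/
theorem asymptotic_limit_orthogonality_identities
    (proj : Lp ℝ 2 μ01 → Lp ℝ 2 μ01)
    (hprojmem : ∀ u, proj u ∈ K01)
    (hprojnear : ∀ u, ∀ k ∈ K01, ‖u - proj u‖ ≤ ‖u - k‖)
    (N0 V0 : Lp ℝ 2 μ01) (hN0K : N0 ∈ K01)
    (hN0range : ∀ᵐ x ∂μ01, (N0 : ℝ → ℝ) x ∈ Set.Icc (0:ℝ) 1)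
    (hV0bdd : ∃ C : ℝ, ∀ᵐ x ∂μ01, |(V0 : ℝ → ℝ) x| ≤ C)
    (N : ℝ → Lp ℝ 2 μ01)
    (hN : ∀ t : ℝ, 0 ≤ t → N t = proj (N0 + t • V0))
    (hconf : ∀ t : ℝ, 0 ≤ t → ∀ᵐ x ∂μ01, (N t : ℝ → ℝ) x ∈ Set.Icc (0:ℝ) 1)
    (Ninf : ℝ → ℝ) (hNinfL2 : MemLp Ninf 2 μ01)
    (hNinf : ∀ᵐ x ∂μ01, Filter.Tendsto (fun t : ℝ => (N t : ℝ → ℝ) x)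
      Filter.atTop (nhds (Ninf x))) :
    (∫ x, (V0 : ℝ → ℝ) x * Ninf x ∂μ01) = 0 ∧
      (∫ x, (N0 : ℝ → ℝ) x * Ninf x ∂μ01) = ∫ x, (Ninf x) ^ 2 ∂μ01 := by
  classical
  set Ninf' : Lp ℝ 2 μ01 := hNinfL2.toLp Ninf with hNinf'def
  have hipInf : ∀ f : Lp ℝ 2 μ01,
      (inner ℝ f Ninf' : ℝ) = ∫ x, (f : ℝ → ℝ) x * Ninf x ∂μ01 := by
    intro f
    rw [inner_eq_int]
    apply integral_congr_ae
    filter_upwards [hNinfL2.coeFn_toLp] with x hx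
    rw [hx]
  have hNseq : ∀ᵐ x ∂μ01, Filter.Tendsto (fun n : ℕ => (N (n:ℝ) : ℝ → ℝ) x)
      Filter.atTop (nhds (Ninf x)) := by
    filter_upwards [hNinf] with x hx
    exact hx.comp tendsto_natCast_atTop_atTop
  have hDC : ∀ f : ℝ → ℝ, Integrable f μ01 →
      Filter.Tendsto (fun n : ℕ => ∫ x, f x * (N (n:ℝ) : ℝ → ℝ) x ∂μ01) Filter.atTop
        (nhds (∫ x, f x * Ninf x ∂μ01)) := by
    intro f hf
    refine tendsto_integral_of_dominated_convergence (fun x => |f x|)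
      (fun n => hf.1.mul (Lp.memLp (N (n:ℝ))).1) hf.abs ?_ ?_
    · intro n
      filter_upwards [hconf n (Nat.cast_nonneg n)] with x hx
      rw [Real.norm_eq_abs, abs_mul]
      have h1 : |(N (n:ℝ) : ℝ → ℝ) x| ≤ 1 := abs_le.2 ⟨by linarith [hx.1], hx.2⟩
      calc |f x| * |(N (n:ℝ) : ℝ → ℝ) x| ≤ |f x| * 1 :=
            mul_le_mul_of_nonneg_left h1 (abs_nonneg _)
        _ = |f x| := mul_one _
    · filter_upwards [hNseq] with x hx
      exact tendsto_const_nhds.mul hx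
  have hC1 : ∀ f : Lp ℝ 2 μ01, Filter.Tendsto (fun n : ℕ => (inner ℝ f (N (n:ℝ)) : ℝ))
      Filter.atTop (nhds (inner ℝ f Ninf' : ℝ)) := by
    intro f
    rw [hipInf f]
    simp_rw [inner_eq_int]
    exact hDC _ ((Lp.memLp f).integrable (by norm_num))
  have hC2 : Filter.Tendsto (fun n : ℕ => (inner ℝ (N (n:ℝ)) (N (n:ℝ)) : ℝ)) Filter.atTop
      (nhds (inner ℝ Ninf' Ninf' : ℝ)) := by
    have heq : (inner ℝ Ninf' Ninf' : ℝ) = ∫ x, Ninf x * Ninf x ∂μ01 := by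
      rw [inner_eq_int]
      apply integral_congr_ae
      filter_upwards [hNinfL2.coeFn_toLp] with x hx
      rw [hx]
    rw [heq]
    simp_rw [inner_eq_int]
    refine tendsto_integral_of_dominated_convergence (fun _ => 1)
      (fun n => (Lp.memLp (N (n:ℝ))).1.mul (Lp.memLp (N (n:ℝ))).1) (integrable_const 1) ?_ ?_
    · intro n
      filter_upwards [hconf n (Nat.cast_nonneg n)] with x hx
      rw [Real.norm_eq_abs, abs_mul]
      have h1 : |(N (n:ℝ) : ℝ → ℝ) x| ≤ 1 := abs_le.2 ⟨by linarith [hx.1], hx.2⟩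
      nlinarith [abs_nonneg ((N (n:ℝ) : ℝ → ℝ) x)]
    · filter_upwards [hNseq] with x hx
      exact hx.mul hx
  have hE : ∀ t : ℝ, 0 ≤ t →
      (inner ℝ N0 (N t) : ℝ) + t * (inner ℝ V0 (N t) : ℝ) = (inner ℝ (N t) (N t) : ℝ) := by
    intro t ht
    have h := proj_orth proj hprojmem hprojnear (N0 + t • V0)
    rw [← hN t ht, inner_sub_left, inner_add_left, real_inner_smul_left] at h
    linarith
  have hNK : ∀ t : ℝ, 0 ≤ t → N t ∈ K01 := fun t ht => by
    rw [hN t ht]; exact hprojmem _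
  have hIneq : ∀ t : ℝ, 0 ≤ t → ∀ k ∈ K01,
      (inner ℝ N0 k : ℝ) + t * (inner ℝ V0 k : ℝ) ≤ (inner ℝ (N t) k : ℝ) := by
    intro t ht k hk
    have h := proj_ineq proj hprojmem hprojnear (N0 + t • V0) k hk
    rw [← hN t ht, inner_sub_left, inner_add_left, real_inner_smul_left] at h
    linarith
  have hMono : ∀ s t : ℝ, 0 ≤ s → s ≤ t →
      (inner ℝ V0 (N s) : ℝ) ≤ (inner ℝ V0 (N t) : ℝ) := by
    intro s t hs hst
    rcases eq_or_lt_of_le hst with h | h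
    · rw [h]
    have ht : 0 ≤ t := le_trans hs hst
    have h1 := proj_var proj hprojmem hprojnear (N0 + t • V0) (N s) (hNK s hs)
    have h2 := proj_var proj hprojmem hprojnear (N0 + s • V0) (N t) (hNK t ht)
    rw [← hN t ht] at h1
    rw [← hN s hs] at h2
    have hq : (0:ℝ) ≤ (inner ℝ (N t - N s) (N t - N s) : ℝ) := real_inner_self_nonneg
    simp only [inner_sub_left, inner_sub_right, inner_add_left, real_inner_smul_left] at h1 h2 hq
    have hcomm := real_inner_comm (N s) (N t)
    nlinarith [mul_pos (sub_pos.2 h) (sub_pos.2 h)]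
  have hprod : ∀ f g : Lp ℝ 2 μ01, (∀ᵐ x ∂μ01, (f : ℝ → ℝ) x ∈ Set.Icc (0:ℝ) 1) →
      (∀ᵐ x ∂μ01, (g : ℝ → ℝ) x ∈ Set.Icc (0:ℝ) 1) →
      (inner ℝ f g : ℝ) ∈ Set.Icc (0:ℝ) 1 := by
    intro f g hf hg
    have hint : Integrable (fun x => (f : ℝ → ℝ) x * (g : ℝ → ℝ) x) μ01 := by
      have := L2.integrable_inner (𝕜 := ℝ) f g
      simpa [RCLike.inner_apply, mul_comm] using this
    rw [inner_eq_int]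
    constructor
    · apply integral_nonneg_of_ae
      filter_upwards [hf, hg] with x h1 h2
      exact mul_nonneg h1.1 h2.1
    · calc (∫ x, (f : ℝ → ℝ) x * (g : ℝ → ℝ) x ∂μ01) ≤ ∫ _, (1:ℝ) ∂μ01 := by
            apply integral_mono_ae hint (integrable_const 1)
            filter_upwards [hf, hg] with x h1 h2
            exact mul_le_one₀ h1.2 h2.1 h2.2
        _ = 1 := by simp
  have hV0lim : Filter.Tendsto (fun n : ℕ => (inner ℝ V0 (N (n:ℝ)) : ℝ)) Filter.atTop (nhds 0) := by
    apply squeeze_zero_norm' ?_ tendsto_one_div_atTop_nhds_zero_nat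
    filter_upwards [Filter.eventually_ge_atTop 1] with n hn
    have hE' := hE n (Nat.cast_nonneg n)
    have h1 := hprod N0 (N (n:ℝ)) hN0range (hconf n (Nat.cast_nonneg n))
    have h2 := hprod (N (n:ℝ)) (N (n:ℝ)) (hconf n (Nat.cast_nonneg n)) (hconf n (Nat.cast_nonneg n))
    have hn1 : (1:ℝ) ≤ (n:ℝ) := by exact_mod_cast hn
    have hpos : (0:ℝ) < (n:ℝ) := by linarith
    rw [Real.norm_eq_abs, abs_le]
    obtain ⟨h1a, h1b⟩ := h1
    obtain ⟨h2a, h2b⟩ := h2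
    constructor
    · rw [neg_le, le_div_iff₀ hpos]
      nlinarith
    · rw [le_div_iff₀ hpos]
      nlinarith
  have hVinf : (inner ℝ V0 Ninf' : ℝ) = 0 := tendsto_nhds_unique (hC1 V0) hV0lim
  have haneg : ∀ t : ℝ, 0 ≤ t → (inner ℝ V0 (N t) : ℝ) ≤ 0 := by
    intro t ht
    refine ge_of_tendsto hV0lim ?_
    filter_upwards [Filter.eventually_ge_atTop ⌈t⌉₊] with n hn
    exact hMono t n ht (le_trans (Nat.le_ceil t) (by exact_mod_cast hn))
  have h3 : (inner ℝ Ninf' Ninf' : ℝ) ≤ (inner ℝ N0 Ninf' : ℝ) := by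
    refine le_of_tendsto_of_tendsto' hC2 (hC1 N0) fun n => ?_
    have hE' := hE n (Nat.cast_nonneg n)
    have ha := haneg n (Nat.cast_nonneg n)
    nlinarith [Nat.cast_nonneg (α := ℝ) n]
  have h4 : (inner ℝ N0 Ninf' : ℝ) ≤ (inner ℝ Ninf' Ninf' : ℝ) := by
    have hstep : ∀ m : ℕ, (inner ℝ N0 Ninf' : ℝ) ≤ (inner ℝ (N (m:ℝ)) Ninf' : ℝ) := by
      intro m
      have hlim : Filter.Tendsto
          (fun n : ℕ => (inner ℝ N0 (N (n:ℝ)) : ℝ) + (m:ℝ) * (inner ℝ V0 (N (n:ℝ)) : ℝ))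
          Filter.atTop (nhds ((inner ℝ N0 Ninf' : ℝ) + (m:ℝ) * 0)) :=
        (hC1 N0).add (hV0lim.const_mul (m:ℝ))
      have hle := le_of_tendsto_of_tendsto' hlim (hC1 (N (m:ℝ)))
        (fun n => hIneq m (Nat.cast_nonneg m) (N (n:ℝ)) (hNK n (Nat.cast_nonneg n)))
      simpa using hle
    exact ge_of_tendsto ((hC1 Ninf').congr fun m => real_inner_comm _ _)
      (Filter.Eventually.of_forall hstep)
  constructor
  · rw [← hipInf V0]; exact hVinf
  · have heq : (inner ℝ N0 Ninf' : ℝ) = (inner ℝ Ninf' Ninf' : ℝ) := le_antisymm h4 h3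
    have h5 : (inner ℝ Ninf' Ninf' : ℝ) = ∫ x, (Ninf x) ^ 2 ∂μ01 := by
      rw [inner_eq_int]
      apply integral_congr_ae
      filter_upwards [hNinfL2.coeFn_toLp] with x hx
      rw [hx]; ring
    rw [← hipInf N0, heq, h5]
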